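/- arXiv:2302.09012 — 8 statements merged into one kernel-verified Lean document; each statement's English description precedes it below -/
import Mathlib

section
/- Let κ be a regular cardinal and λ < κ a cardinal. If there exists a ◇*(κ)-sequence, then 2^λ ≤ κ. -/
open Cardinal

/-- `C` is a club (closed unbounded) subset of the ordinal `o`. -/
def IsClubIn (C : Set Ordinal) (o : Ordinal) : Prop :=
  C ⊆ Set.Iio o ∧ (∀ a < o, ∃ b ∈ C, a ≤ b) ∧
    (∀ a < o, a ≠ 0 → (∀ b < a, ∃ c ∈ C, b < c ∧ c < a) → a ∈ C)

/-- `S` is a `◇*(κ)`-sequence: each `S α` is a family of fewer than `κ` subsets of `α`,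
and every `X ⊆ κ` is guessed on a set of `α`'s containing a club. -/
def IsDiamondStarSeq (κ : Cardinal.{0}) (S : Ordinal.{0} → Set (Set Ordinal.{0})) : Prop :=
  (∀ α < κ.ord, (∀ x ∈ S α, x ⊆ Set.Iio α) ∧ #(S α) < Cardinal.lift.{1} κ) ∧
    ∀ X ⊆ Set.Iio κ.ord, ∃ C, IsClubIn C κ.ord ∧ ∀ α ∈ C, X ∩ Set.Iio α ∈ S α

/-! Every subset of `β < κ` is guessed at some `α ≥ β` of the club, where it equals its own
trace on `α`. So `𝒫(β)` lies in the union of the `κ` families `S α`, each of size `< κ`,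
which has size at most `κ · κ = κ`. -/

namespace IsDiamondStarSeq

variable {κ : Cardinal.{0}} {S : Ordinal.{0} → Set (Set Ordinal.{0})}

theorem powerset_Iio_subset_biUnion (hS : IsDiamondStarSeq κ S) {β : Ordinal} (hβ : β < κ.ord) :
    𝒫 Set.Iio β ⊆ ⋃ α < κ.ord, S α := by
  intro X (hX : X ⊆ Set.Iio β)
  obtain ⟨C, ⟨hCκ, hCunbdd, -⟩, hguess⟩ := hS.2 X (hX.trans (Set.Iio_subset_Iio hβ.le))
  obtain ⟨α, hαC, hβα⟩ := hCunbdd β hβ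
  have hXα : X ∩ Set.Iio α = X := Set.inter_eq_left.2 (hX.trans (Set.Iio_subset_Iio hβα))
  exact Set.mem_iUnion₂.2 ⟨α, hCκ hαC, hXα ▸ hguess α hαC⟩

theorem mk_biUnion_le (hS : IsDiamondStarSeq κ S) (hκ : ℵ₀ ≤ κ) :
    #(⋃ α < κ.ord, S α) ≤ lift.{1} κ :=
  mk_biUnion_le_of_le_lift (by simp) (aleph0_le_lift.2 hκ) S fun α hα => (hS.1 α hα).2.le

end IsDiamondStarSeq

/-- if `κ` is regular, `λ < κ` and a `◇*(κ)`-sequence exists,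
then `2^λ ≤ κ`. -/
theorem diamondStar_implies_pow_le (κ l : Cardinal.{0}) (hreg : κ.IsRegular) (hl : l < κ)
    (S : Ordinal.{0} → Set (Set Ordinal.{0})) (hS : IsDiamondStarSeq κ S) :
    2 ^ l ≤ κ := by
  rw [← lift_le.{1}, lift_two_power]
  calc 2 ^ lift.{1} l = #(𝒫 Set.Iio l.ord) := by
        rw [mk_powerset, mk_Iio_ordinal, card_ord]
    _ ≤ #(⋃ α < κ.ord, S α) :=
        mk_le_mk_of_subset (hS.powerset_Iio_subset_biUnion (ord_lt_ord.2 hl))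
    _ ≤ lift.{1} κ := hS.mk_biUnion_le hreg.aleph0_le
end

section
/- Let κ be an uncountable regular cardinal. If there exists a ◇*(κ)-sequence, then there exists a strongly independent family on κ of cardinality 2^κ, i.e., a family 𝓘 ⊆ 𝒫(κ) with |𝓘| = 2^κ such that for every partial function h : 𝓘 ⇀ 2 with |dom(h)| < κ, the set ⋂_{I∈dom(h)} I^{h(I)} has cardinality κ (where I^0 = I, I^1 = κ∖I). -/
/-!
The family is `{I_X : X ⊆ κ}`, where `I_X` is the set of codes of the pairs `(α, 𝒜)` with
`α < κ`, `𝒜 ⊆ S_α` and `X ∩ α ∈ 𝒜`. There are only `κ` such pairs, because `◇*(κ)` forces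
`2^μ ≤ κ` for `μ < κ`: every subset of `μ` is guessed by some `S_α`. Given fewer than `κ` sets `X`
with signs, their traces `X ∩ α` are pairwise distinct for all large `α`; for such an `α` lying on
all the clubs where `S` guesses these `X`, the code of `(α, {X ∩ α : X has sign 0})` lies in the
Boolean combination. Distinct `α` give distinct codes, so the combination has size `κ`.
-/

open Cardinal

open Set Function Order

universe u

theorem Set.exists_surjOn_of_mk_le {α β : Type u} {s : Set α} {t : Set β} (ht : t.Nonempty)
    (h : #t ≤ #s) : ∃ d : α → β, SurjOn d s t := by
  obtain ⟨e⟩ := h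
  have := ht.to_subtype
  have he : Injective (Subtype.val ∘ e) := Subtype.val_injective.comp e.injective
  refine ⟨Subtype.val ∘ invFun (Subtype.val ∘ e), fun b hb => ⟨e ⟨b, hb⟩, (e _).2, ?_⟩⟩
  exact congrArg Subtype.val (leftInverse_invFun he ⟨b, hb⟩)

theorem IsClubIn.isClub_preimage {C : Set Ordinal.{u}} {o : Ordinal.{u}} (hC : IsClubIn C o) :
    IsClub ((↑) ⁻¹' C : Set (Iio o)) := by
  refine ⟨fun t htC ht _ a ha => ?_, fun x => ?_⟩
  · by_cases hat : a ∈ t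
    · exact htC hat
    have hlt : ∀ c ∈ t, c < a := fun c hct => (ha.1 hct).lt_of_ne (ne_of_mem_of_not_mem hct hat)
    obtain ⟨c, hct⟩ := ht
    refine hC.2.2 a a.2 (ne_bot_of_gt (hlt c hct)) fun b hba => ?_
    have hb : (⟨b, hba.trans a.2⟩ : Iio o) ∉ upperBounds t := fun hb => (ha.2 hb).not_gt hba
    simp only [mem_upperBounds, not_forall, not_le] at hb
    obtain ⟨c, hct, hbc⟩ := hb
    exact ⟨c, htC hct, hbc, hlt c hct⟩
  · obtain ⟨b, hbC, hxb⟩ := hC.2.1 x x.2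
    exact ⟨⟨b, hC.1 hbC⟩, hbC, hxb⟩

theorem Cardinal.IsRegular.cof_Iio_ord {κ : Cardinal.{u}} (hκ : κ.IsRegular) :
    Order.cof (Iio κ.ord) = Cardinal.lift.{u + 1} κ := by
  rw [Ordinal.cof_Iio, ← Ordinal.lift_cof, hκ.cof_ord]

theorem Cardinal.mk_Iio_ord (κ : Cardinal.{u}) : #(Iio κ.ord) = lift.{u + 1} κ := by
  rw [mk_Iio_ordinal, card_ord]

variable {κ : Cardinal.{0}} {S : Ordinal.{0} → Set (Set Ordinal.{0})}

theorem IsDiamondStarSeq.two_power_le (hS : IsDiamondStarSeq κ S) (hκ : ℵ₀ ≤ κ)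
    {μ : Cardinal.{1}} (hμ : μ < Cardinal.lift.{1} κ) : 2 ^ μ ≤ Cardinal.lift.{1} κ := by
  obtain ⟨μ, hμκ, rfl⟩ := lt_lift_iff.1 hμ
  have hδ : μ.ord < κ.ord := ord_lt_ord.2 hμκ
  have hsub : 𝒫 Iio μ.ord ⊆ ⋃ α < κ.ord, S α := by
    intro X hX
    obtain ⟨C, hC, hCS⟩ := hS.2 X (hX.trans (Iio_subset_Iio hδ.le))
    obtain ⟨α, hαC, hδα⟩ := hC.2.1 _ hδ
    have hXα : X ∩ Iio α = X := inter_eq_left.2 (hX.trans (Iio_subset_Iio hδα))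
    exact mem_iUnion₂.2 ⟨α, hC.1 hαC, hXα ▸ hCS α hαC⟩
  calc 2 ^ Cardinal.lift.{1} μ = #(𝒫 Iio μ.ord) := by rw [mk_powerset, mk_Iio_ord]
    _ ≤ _ := (mk_le_mk_of_subset hsub).trans <| mk_biUnion_le_of_le_lift (by simp)
      (aleph0_le_lift.2 hκ) _ fun α hα => (hS.1 α hα).2.le

def guessPairs (κ : Cardinal.{0}) (S : Ordinal.{0} → Set (Set Ordinal.{0})) :
    Set (Ordinal.{0} × Set (Set Ordinal.{0})) :=
  {p | p.1 < κ.ord ∧ p.2 ⊆ S p.1}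

theorem IsDiamondStarSeq.mk_guessPairs_le (hS : IsDiamondStarSeq κ S) (hκ : ℵ₀ ≤ κ) :
    #(guessPairs κ S) ≤ Cardinal.lift.{1} κ := by
  have hsub : guessPairs κ S ⊆ ⋃ α < κ.ord, Prod.mk α '' 𝒫 S α :=
    fun p hp => mem_iUnion₂.2 ⟨p.1, hp.1, p.2, hp.2, rfl⟩
  refine (mk_le_mk_of_subset hsub).trans <| mk_biUnion_le_of_le_lift (by simp)
    (aleph0_le_lift.2 hκ) _ fun α hα => ?_
  exact mk_image_le.trans ((mk_powerset _).trans_le (hS.two_power_le hκ (hS.1 α hα).2))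

theorem guessPairs_nonempty (hκ : κ.IsRegular) : (guessPairs κ S).Nonempty :=
  ⟨(0, ∅), hκ.ord_pos, empty_subset _⟩

/-- Reading `d β` as the pair coded by `β`, this is the paper's `I_X`: the codes of the pairs
`(α, 𝒜)` with `X ∩ α ∈ 𝒜`. -/
def traceSet (κ : Cardinal.{0}) (d : Ordinal.{0} → Ordinal.{0} × Set (Set Ordinal.{0}))
    (X : Set Ordinal.{0}) : Set Ordinal.{0} :=
  {β | β < κ.ord ∧ X ∩ Iio (d β).1 ∈ (d β).2}

theorem exists_injOn_inter_Iio (hκ : κ.IsRegular) {𝒳 : Set (Set Ordinal.{0})}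
    (h𝒳 : 𝒳 ⊆ 𝒫 Iio κ.ord) (h𝒳κ : #𝒳 < Cardinal.lift.{1} κ) :
    ∃ γ : Iio κ.ord, ∀ α : Ordinal, ↑γ ≤ α → InjOn (· ∩ Iio α) 𝒳 := by
  have hsep (p : 𝒳.offDiag) :
      ∃ β : Iio κ.ord, ¬((β : Ordinal) ∈ p.1.1 ↔ (β : Ordinal) ∈ p.1.2) := by
    obtain ⟨⟨X, Y⟩, hX, hY, hXY⟩ := p
    obtain ⟨β, hβ⟩ := not_forall.1 (mt Set.ext hXY)
    have hβXY : β ∈ X ∪ Y := by tauto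
    exact ⟨⟨β, union_subset (h𝒳 hX) (h𝒳 hY) hβXY⟩, hβ⟩
  choose sep hsep using hsep
  have hsmall : #(range sep) < Order.cof (Iio κ.ord) := by
    rw [hκ.cof_Iio_ord]
    calc #(range sep) ≤ #(𝒳 ×ˢ 𝒳) := mk_range_le.trans (mk_le_mk_of_subset (offDiag_subset_prod _))
      _ < _ := by
        rw [mk_setProd]
        exact mul_lt_of_lt (aleph0_le_lift.2 hκ.aleph0_le) h𝒳κ h𝒳κ
  obtain ⟨γ, hγ⟩ := not_isCofinal_iff.1 fun h => (cof_le h).not_gt hsmall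
  refine ⟨γ, fun α hγα X hX Y hY hXY => by_contra fun hne => ?_⟩
  set p : 𝒳.offDiag := ⟨(X, Y), hX, hY, hne⟩
  have hlt : (sep p : Ordinal) < α := (Subtype.coe_lt_coe.2 (hγ _ (mem_range_self p))).trans_le hγα
  exact hsep p (by simpa [hlt] using congrArg ((sep p : Ordinal) ∈ ·) hXY)

section Coding

variable {d : Ordinal.{0} → Ordinal.{0} × Set (Set Ordinal.{0})}

theorem lift_le_mk_inter_biInter_traceSet (hκ : κ.IsRegular) (hu : ℵ₀ < κ)
    (hS : IsDiamondStarSeq κ S) (hd : SurjOn d (Iio κ.ord) (guessPairs κ S))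
    {𝒳 : Set (Set Ordinal.{0})} (h𝒳 : 𝒳 ⊆ 𝒫 Iio κ.ord)
    (h𝒳κ : #𝒳 < Cardinal.lift.{1} κ) (g : Set Ordinal.{0} → Bool) :
    Cardinal.lift.{1} κ ≤
      #↥(Iio κ.ord ∩ ⋂ X ∈ 𝒳, if g X then Iio κ.ord \ traceSet κ d X else traceSet κ d X) := by
  choose C hC hCS using fun X : 𝒳 => hS.2 X (h𝒳 X.2)
  obtain ⟨γ, hγ⟩ := exists_injOn_inter_Iio hκ h𝒳 h𝒳κ
  have hclub : IsClub (⋂ X : 𝒳, ((↑) ⁻¹' C X : Set (Iio κ.ord))) := by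
    refine IsClub.iInter ?_ ?_ fun X => (hC X).isClub_preimage
    · rw [hκ.cof_Iio_ord]
      exact (aleph0_lt_lift.2 hu).ne'
    · rwa [hκ.cof_Iio_ord, lift_id, lift_id]
  set A := Ici γ ∩ ⋂ X : 𝒳, ((↑) ⁻¹' C X : Set (Iio κ.ord))
  have hA : IsCofinal A := fun x => by
    obtain ⟨y, hy, hxy⟩ := hclub.isCofinal (max x γ)
    exact ⟨y, ⟨(le_max_right _ _).trans hxy, hy⟩, (le_max_left _ _).trans hxy⟩
  have hpair : ∀ α ∈ A,
      ((α : Ordinal), (· ∩ Iio (α : Ordinal)) '' {Y ∈ 𝒳 | g Y = false}) ∈ guessPairs κ S := by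
    rintro α ⟨-, hαC⟩
    refine ⟨α.2, ?_⟩
    rintro _ ⟨Y, ⟨hY, -⟩, rfl⟩
    exact hCS ⟨Y, hY⟩ α (mem_iInter.1 hαC ⟨Y, hY⟩)
  choose! code hcode hdcode using fun α (hα : α ∈ A) => hd (hpair α hα)
  have hinj : InjOn code A := fun α hα α' hα' h => Subtype.ext <| by
    simpa [hdcode α hα, hdcode α' hα'] using congrArg (fun β => (d β).1) h
  have hmaps : MapsTo code A
      (Iio κ.ord ∩ ⋂ X ∈ 𝒳, if g X then Iio κ.ord \ traceSet κ d X else traceSet κ d X) := by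
    intro α hα
    refine ⟨hcode α hα, mem_iInter₂.2 fun X hX => ?_⟩
    cases hgX : g X
    · exact ⟨hcode α hα, by rw [hdcode α hα]; exact ⟨X, ⟨hX, hgX⟩, rfl⟩⟩
    · refine ⟨hcode α hα, fun ⟨_, hXα⟩ => ?_⟩
      rw [hdcode α hα] at hXα
      obtain ⟨Y, ⟨hY, hgY⟩, hYX⟩ := hXα
      rw [hγ α hα.1 hY hX hYX, hgX] at hgY
      exact Bool.noConfusion hgY
  calc Cardinal.lift.{1} κ = Order.cof (Iio κ.ord) := hκ.cof_Iio_ord.symm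
    _ ≤ #A := cof_le hA
    _ = #(code '' A) := (mk_image_eq_of_injOn _ _ hinj).symm
    _ ≤ _ := mk_le_mk_of_subset (image_subset_iff.2 hmaps)

theorem injOn_traceSet (hκ : κ.IsRegular) (hu : ℵ₀ < κ) (hS : IsDiamondStarSeq κ S)
    (hd : SurjOn d (Iio κ.ord) (guessPairs κ S)) : InjOn (traceSet κ d) (𝒫 Iio κ.ord) := by
  intro X hX Y hY hXY
  by_contra hne
  have hsmall : #({X, Y} : Set (Set Ordinal.{0})) < Cardinal.lift.{1} κ :=
    (finite_singleton Y).insert X |>.lt_aleph0.trans_le (aleph0_le_lift.2 hκ.aleph0_le)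
  have hbig := lift_le_mk_inter_biInter_traceSet hκ hu hS hd
    (insert_subset hX (singleton_subset_iff.2 hY)) hsmall fun Z => decide (Z = Y)
  obtain ⟨⟨β, -, hβ⟩⟩ := mk_ne_zero_iff.1 (ne_bot_of_le_ne_bot hκ.lift.ne_zero hbig)
  simp only [mem_iInter, mem_insert_iff, mem_singleton_iff, forall_eq_or_imp, forall_eq,
    decide_eq_true_eq, hne, if_true, if_false] at hβ
  exact hβ.2.2 (hXY ▸ hβ.1)

end Coding

/-- if `κ` is uncountable regular and a `◇*(κ)`-sequence exists, then
there is a strongly independent family on `κ` (identified with `Set.Iio κ.ord`)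
of cardinality `2^κ`: every Boolean combination of length `< κ` has size `κ`.
Here `I^0 = I` (sign `false`) and `I^1 = κ ∖ I` (sign `true`). -/
theorem diamondStar_implies_strongly_independent
    (κ : Cardinal.{0}) (hreg : κ.IsRegular) (hu : ℵ₀ < κ)
    (S : Ordinal.{0} → Set (Set Ordinal.{0})) (hS : IsDiamondStarSeq κ S) :
    ∃ 𝓘 : Set (Set Ordinal.{0}), (∀ I ∈ 𝓘, I ⊆ Set.Iio κ.ord) ∧
      #𝓘 = Cardinal.lift.{1} (2 ^ κ) ∧
      ∀ D ⊆ 𝓘, #D < Cardinal.lift.{1} κ → ∀ f : Set Ordinal.{0} → Bool,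
        #(↥(Set.Iio κ.ord ∩ ⋂ I ∈ D, (if f I then Set.Iio κ.ord \ I else I)))
          = Cardinal.lift.{1} κ := by
  obtain ⟨d, hd⟩ := exists_surjOn_of_mk_le (guessPairs_nonempty hreg)
    ((hS.mk_guessPairs_le hreg.aleph0_le).trans (mk_Iio_ord κ).ge)
  have hinj := injOn_traceSet hreg hu hS hd
  refine ⟨traceSet κ d '' 𝒫 Iio κ.ord, ?_, ?_, fun D hD hDκ f => ?_⟩
  · rintro _ ⟨X, -, rfl⟩ β hβ
    exact hβ.1
  · rw [mk_image_eq_of_injOn _ _ hinj, mk_powerset, mk_Iio_ord, lift_two_power]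
  obtain ⟨𝒳, h𝒳, rfl⟩ := subset_image_iff.1 hD
  rw [mk_image_eq_of_injOn _ _ (hinj.mono h𝒳)] at hDκ
  rw [biInter_image]
  refine le_antisymm ((mk_le_mk_of_subset inter_subset_left).trans_eq (mk_Iio_ord κ)) ?_
  exact lift_le_mk_inter_biInter_traceSet hreg hu hS hd h𝒳 hDκ (f ∘ traceSet κ d)
end

section
/- Let κ be an infinite cardinal. If there exists a strongly independent family on κ⁺ of cardinality κ, then 2^κ = κ⁺. -/
/-!
Strong independence applied to the whole family `𝓘` (of size `κ < κ⁺`) says that every sign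
pattern `𝓘 → Bool` is realized by some point, so sending a point to its sign pattern is a
surjection from `κ⁺` onto `2 ^ κ`; Cantor's theorem gives the other inequality.
-/

open Cardinal

namespace Set

variable {α : Type*}

open Classical in
/-- The unique signs with `x ∈ I^(signPattern 𝓘 x I)` for all `I ∈ 𝓘`,
where `I^false = I` and `I^true = Iᶜ`. -/
noncomputable def signPattern (𝓘 : Set (Set α)) (x : α) : 𝓘 → Bool := fun I => decide (x ∉ (I : Set α))

theorem mem_iInter_ite_compl_iff {𝓘 : Set (Set α)} {F : Set α → Bool} {x : α} :
    x ∈ ⋂ I ∈ 𝓘, (if F I then Iᶜ else I) ↔ F ∘ (↑) = signPattern 𝓘 x := by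
  simp only [mem_iInter, funext_iff, Subtype.forall, Function.comp_apply, signPattern]
  refine forall₂_congr fun I _ => ?_
  cases F I <;> simp

theorem signPattern_surjective {𝓘 : Set (Set α)}
    (h : ∀ F : Set α → Bool, (⋂ I ∈ 𝓘, if F I then Iᶜ else I).Nonempty) :
    Function.Surjective (signPattern 𝓘) := by
  intro f
  let F : Set α → Bool := Function.extend Subtype.val f fun _ => false
  have hF : F ∘ (↑) = f := Function.extend_comp Subtype.val_injective f _
  obtain ⟨x, hx⟩ := h F
  exact ⟨x, (hF ▸ mem_iInter_ite_compl_iff.mp hx).symm⟩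

theorem two_power_mk_le_of_forall_nonempty {𝓘 : Set (Set α)}
    (h : ∀ F : Set α → Bool, (⋂ I ∈ 𝓘, if F I then Iᶜ else I).Nonempty) :
    2 ^ #𝓘 ≤ #α := by
  simpa using mk_le_of_surjective (signPattern_surjective h)

end Set

theorem strongly_independent_implies_CH_general (κ : Cardinal.{0})
    (α : Type) (hα : #α = Order.succ κ) (𝓘 : Set (Set α)) (hcard : #𝓘 = κ)
    (hind : ∀ D ⊆ 𝓘, #D < Order.succ κ → ∀ f : Set α → Bool,
      #(↥(⋂ I ∈ D, (if f I then Iᶜ else I))) = Order.succ κ) :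
    2 ^ κ = Order.succ κ := by
  have hnonempty : ∀ F : Set α → Bool, (⋂ I ∈ 𝓘, if F I then Iᶜ else I).Nonempty := by
    intro F
    rw [← Set.nonempty_coe_sort, ← mk_ne_zero_iff, hind 𝓘 subset_rfl (hcard ▸ Order.lt_succ κ) F]
    exact (Order.bot_lt_succ κ).ne'
  refine le_antisymm ?_ (Order.succ_le_of_lt (cantor κ))
  rw [← hα, ← hcard]
  exact Set.two_power_mk_le_of_forall_nonempty hnonempty

/-- if there is a strongly independent family of cardinality `κ` on a set
of cardinality `κ⁺` (every Boolean combination of length `< κ⁺` has size `κ⁺`),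
then `2^κ = κ⁺`.  Here `I^0 = I` (sign `false`) and `I^1 = complement` (sign `true`). -/
theorem strongly_independent_implies_CH (κ : Cardinal.{0}) (hκ : ℵ₀ ≤ κ)
    (α : Type) (hα : #α = Order.succ κ) (𝓘 : Set (Set α)) (hcard : #𝓘 = κ)
    (hind : ∀ D ⊆ 𝓘, #D < Order.succ κ → ∀ f : Set α → Bool,
      #(↥(⋂ I ∈ D, (if f I then Iᶜ else I))) = Order.succ κ) :
    2 ^ κ = Order.succ κ :=
  strongly_independent_implies_CH_general κ α hα 𝓘 hcard hind
end

section
/- Let κ be an infinite cardinal. If 2^κ = κ⁺, then there exists a strongly independent family on κ⁺ of cardinality κ. -/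
/-!
Under `2^κ = κ⁺` we have `κ⁺ = 2^κ · κ⁺`, so the underlying set can be written as
`(κ → Bool) × κ⁺`. The `κ` coordinate sets `{(g, a) | g k = true}` form the family: a Boolean
combination of any subfamily, even of all of them, contains a whole fibre `{g} × κ⁺`, where `g`
records the prescribed signs.
-/

open Cardinal

universe u

section CoordSet

variable {α ι : Type*}

def coordSet (π : α → ι → Bool) (i : ι) : Set α := {a | π a i = true}

theorem coordSet_injective {π : α → ι → Bool} (hπ : Function.Surjective π) :
    Function.Injective (coordSet π) := by
  classical
  intro i j hij
  obtain ⟨a, ha⟩ := hπ fun k => decide (k = i)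
  have hai : a ∈ coordSet π i := by simp [coordSet, ha]
  rw [hij] at hai
  have haj : π a j = true := hai
  rw [ha] at haj
  exact (of_decide_eq_true haj).symm

theorem preimage_subset_iInter_coordSet (π : α → ι → Bool) (f : Set α → Bool) :
    π ⁻¹' {fun i => !f (coordSet π i)} ⊆
      ⋂ I ∈ Set.range (coordSet π), (if f I then Iᶜ else I) := by
  intro a ha
  simp only [Set.mem_preimage, Set.mem_singleton_iff] at ha
  simp only [Set.mem_iInter, Set.mem_range, forall_exists_index, forall_apply_eq_imp_iff]
  intro i
  have hπi : π a i = !f (coordSet π i) := by rw [ha]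
  cases hf : f (coordSet π i)
  · simp only [Bool.false_eq_true, if_false]
    show π a i = true
    rw [hπi, hf]; rfl
  · simp only [if_true]
    show ¬π a i = true
    rw [hπi, hf]; decide

end CoordSet

theorem mk_preimage_fst_singleton {β γ : Type u} (g : γ) :
    #(Prod.fst ⁻¹' {g} : Set (γ × β)) = #β := by
  rw [← Set.prod_univ, mk_congr (Equiv.Set.prod _ _)]
  simp

/-- if `2^κ = κ⁺`, then on any set of cardinality `κ⁺` there is a strongly
independent family of cardinality `κ`: every Boolean combination of length `< κ⁺`
has size `κ⁺`.  Here `I^0 = I` (sign `false`) and `I^1 = complement` (sign `true`). -/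
theorem CH_implies_strongly_independent (κ : Cardinal.{0}) (hκ : ℵ₀ ≤ κ)
    (α : Type) (hα : #α = Order.succ κ) (h2 : 2 ^ κ = Order.succ κ) :
    ∃ 𝓘 : Set (Set α), #𝓘 = κ ∧
      ∀ D ⊆ 𝓘, #D < Order.succ κ → ∀ f : Set α → Bool,
        #(↥(⋂ I ∈ D, (if f I then Iᶜ else I))) = Order.succ κ := by
  have hfun : #(κ.out → Bool) = Order.succ κ := by
    rw [← power_def, mk_bool, mk_out, h2]
  have hprod : #α = #((κ.out → Bool) × α) := by
    rw [mk_prod, lift_id, lift_id, hfun, hα, mul_eq_self (hκ.trans (Order.le_succ κ))]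
  obtain ⟨e⟩ := Cardinal.eq.mp hprod
  have : Nonempty α := by
    rw [← mk_ne_zero_iff, hα]
    exact (Order.lt_succ κ).ne_bot
  set π : α → κ.out → Bool := Prod.fst ∘ e
  have hπ : Function.Surjective π :=
    Prod.fst_surjective.comp e.surjective
  refine ⟨Set.range (coordSet π), by rw [mk_range_eq _ (coordSet_injective hπ), mk_out], ?_⟩
  intro D hD _ f
  refine le_antisymm (hα ▸ mk_set_le _) ?_
  calc Order.succ κ = #(π ⁻¹' {fun i => !f (coordSet π i)}) := by
        rw [Set.preimage_comp, mk_preimage_equiv, mk_preimage_fst_singleton, hα]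
    _ ≤ _ := mk_le_mk_of_subset <|
        (preimage_subset_iInter_coordSet π f).trans (Set.biInter_subset_biInter_left hD)
end

section
/- Let κ be an inaccessible (regular limit) cardinal such that for every infinite cardinal λ < κ there exists a strongly independent family on λ⁺ of cardinality λ. Then κ is strongly inaccessible. -/
open Cardinal

/-! A strongly independent family `𝓘` on `λ⁺` of size `λ` already has all `2 ^ λ` Boolean
combinations of its full set of members nonempty, and points of `λ⁺` witnessing them are pairwise
distinct; so `2 ^ λ ≤ λ⁺ < κ` for every infinite `λ < κ`. -/

universe u

theorem two_power_mk_le_of_forall_nonempty_iInter {β : Type u} (𝓘 : Set (Set β))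
    (h𝓘 : ∀ f : Set β → Bool, (⋂ I ∈ 𝓘, if f I then Iᶜ else I).Nonempty) :
    2 ^ #𝓘 ≤ #β := by
  classical
  have hsurj : Function.Surjective fun (x : β) (I : 𝓘) => decide (x ∉ (I : Set β)) := by
    intro g
    obtain ⟨x, hx⟩ := h𝓘 (Function.extend Subtype.val g fun _ => false)
    refine ⟨x, funext fun I => ?_⟩
    have hxI := Set.mem_iInter₂.1 hx I I.2
    rw [Subtype.val_injective.extend_apply] at hxI
    cases hg : g I <;> simp_all
  simpa [mk_arrow] using mk_le_of_surjective hsurj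

/-- if `κ` is inaccessible (uncountable, regular and a limit cardinal) and
for every infinite `λ < κ` there is a strongly independent family on a set of size `λ⁺`
of cardinality `λ`, then `κ` is strongly inaccessible. -/
theorem inaccessible_of_strongly_independent_families (κ : Cardinal.{0})
    (hu : ℵ₀ < κ) (hreg : κ.IsRegular) (hlim : ∀ l < κ, Order.succ l < κ)
    (h : ∀ l : Cardinal.{0}, ℵ₀ ≤ l → l < κ →
      ∃ (β : Type) (_ : #β = Order.succ l) (𝓘 : Set (Set β)), #𝓘 = l ∧
        ∀ D ⊆ 𝓘, #D < Order.succ l → ∀ f : Set β → Bool,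
          #(↥(⋂ I ∈ D, (if f I then Iᶜ else I))) = Order.succ l) :
    κ.IsInaccessible := by
  refine ⟨hu, hreg.2, fun l hl => ?_⟩
  rcases lt_or_ge l ℵ₀ with hfin | hinf
  · exact (power_lt_aleph0 (natCast_lt_aleph0 (n := 2)) hfin).trans hu
  obtain ⟨β, hβ, 𝓘, h𝓘, hind⟩ := h l hinf hl
  have hnonempty (f : Set β → Bool) : (⋂ I ∈ 𝓘, if f I then Iᶜ else I).Nonempty := by
    rw [← Set.nonempty_coe_sort, ← mk_ne_zero_iff,
      hind 𝓘 le_rfl (h𝓘 ▸ Order.lt_succ l) f]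
    exact succ_ne_zero l
  calc 2 ^ l = 2 ^ #𝓘 := by rw [h𝓘]
    _ ≤ #β := two_power_mk_le_of_forall_nonempty_iInter 𝓘 hnonempty
    _ = Order.succ l := hβ
    _ < κ := hlim l hl
end

section
/- Let κ be a cardinal and 𝓘 a strongly independent family on κ with |𝓘| < κ. Then 𝓘 is not maximal: there exists Z ⊆ κ with Z ∉ 𝓘 such that 𝓘 ∪ {Z} is still strongly independent. -/
open Cardinal

lemma exists_half_aux {α : Type} (s : Set α) (hs : ℵ₀ ≤ #s) :
    ∃ t, t ⊆ s ∧ #t = #s ∧ #(s \ t : Set α) = #s := by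
  have h : #(↥s ⊕ ↥s) = #s := by
    simp [Cardinal.mk_sum, Cardinal.add_eq_self hs]
  obtain ⟨e⟩ := Cardinal.eq.1 h
  have hinjl : Function.Injective (fun b : s => (e (Sum.inl b) : α)) :=
    Subtype.val_injective.comp (e.injective.comp Sum.inl_injective)
  have hinjr : Function.Injective (fun b : s => (e (Sum.inr b) : α)) :=
    Subtype.val_injective.comp (e.injective.comp Sum.inr_injective)
  refine ⟨Set.range (fun b : s => (e (Sum.inl b) : α)), ?_, ?_, ?_⟩
  · rintro a ⟨b, rfl⟩; exact (e (Sum.inl b)).2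
  · rw [Cardinal.mk_range_eq _ hinjl]
  · have heq : s \ Set.range (fun b : s => (e (Sum.inl b) : α))
        = Set.range (fun b : s => (e (Sum.inr b) : α)) := by
      ext a
      constructor
      · rintro ⟨ha, hna⟩
        rcases h' : e.symm ⟨a, ha⟩ with b | b
        · exact absurd ⟨b, by simp only []; rw [← h', e.apply_symm_apply]⟩ hna
        · exact ⟨b, by simp only []; rw [← h', e.apply_symm_apply]⟩
      · rintro ⟨b, rfl⟩
        refine ⟨(e (Sum.inr b)).2, ?_⟩
        rintro ⟨b', hb'⟩
        exact Sum.inl_ne_inr (e.injective (Subtype.val_injective hb'))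
    rw [heq, Cardinal.mk_range_eq _ hinjr]

/-- a strongly independent family `𝓘` on an infinite `κ` with `|𝓘| < κ`
is not maximal: some `Z ∉ 𝓘` can be added keeping strong independence
(all Boolean combinations of length `< κ` have size `κ`). -/
theorem small_strongly_independent_not_maximal (α : Type) (hinf : ℵ₀ ≤ #α)
    (𝓘 : Set (Set α)) (hsmall : #𝓘 < #α)
    (hind : ∀ D ⊆ 𝓘, #D < #α → ∀ f : Set α → Bool,
      #(↥(⋂ I ∈ D, (if f I then Iᶜ else I))) = #α) :
    ∃ Z : Set α, Z ∉ 𝓘 ∧ ∀ D ⊆ insert Z 𝓘, #D < #α → ∀ f : Set α → Bool,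
      #(↥(⋂ I ∈ D, (if f I then Iᶜ else I))) = #α := by
  classical
  -- the atom of a point x
  set A : α → Set α := fun x => {y | ∀ I ∈ 𝓘, (x ∈ I ↔ y ∈ I)} with hAdef
  have hAsymm : ∀ {x y : α}, y ∈ A x → x ∈ A y := fun h I hI => (h I hI).symm
  have hAeq : ∀ {x y : α}, y ∈ A x → A x = A y := by
    intro x y h
    ext z
    constructor
    · intro hz I hI; exact ((h I hI).symm.trans (hz I hI))
    · intro hz I hI; exact ((h I hI).trans (hz I hI))
  -- each atom has full size
  have hA : ∀ x, #(A x) = #α := by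
    intro x
    have h := hind 𝓘 subset_rfl hsmall (fun I => decide (x ∉ I))
    have : (⋂ I ∈ 𝓘, (if (fun I => decide (x ∉ I)) I then Iᶜ else I)) = A x := by
      ext y
      simp only [Set.mem_iInter, hAdef, Set.mem_setOf_eq]
      constructor
      · intro hy I hI
        have := hy I hI
        by_cases hx : x ∈ I <;> simp [hx] at this <;> simp [hx, this]
      · intro hy I hI
        have := hy I hI
        by_cases hx : x ∈ I <;> simp [hx] at this ⊢ <;> simp [this]
    rwa [this] at h
  -- split each atom into two halves of full size, coherently via the quotient
  have hsplit : ∀ x : α, ∃ t, t ⊆ A x ∧ #t = #α ∧ #((A x) \ t : Set α) = #α := by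
    intro x
    obtain ⟨t, ht1, ht2, ht3⟩ := exists_half_aux (A x) (by rw [hA x]; exact hinf)
    exact ⟨t, ht1, by rw [ht2, hA x], by rw [ht3, hA x]⟩
  set st : Setoid α := ⟨fun x y => y ∈ A x,
    ⟨fun x I _ => Iff.rfl, fun h => hAsymm h, fun h1 h2 => (hAeq h1) ▸ h2⟩⟩ with hstdef
  set S : Quotient st → Set α := fun q => (hsplit q.out).choose with hSdef
  have hS1 : ∀ q, S q ⊆ A q.out := fun q => (hsplit q.out).choose_spec.1
  have hS2 : ∀ q, #(S q) = #α := fun q => (hsplit q.out).choose_spec.2.1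
  have hS3 : ∀ q, #((A q.out) \ S q : Set α) = #α := fun q => (hsplit q.out).choose_spec.2.2
  set Z : Set α := {x | x ∈ S (Quotient.mk st x)} with hZdef
  -- the atom of x equals the atom of the representative
  have hAout : ∀ x : α, A ((Quotient.mk st x).out) = A x := by
    intro x
    have : st.r x ((Quotient.mk st x).out) := Quotient.exact (Quotient.out_eq _).symm
    exact (hAeq this).symm
  -- Z ∩ A x = S ⟦x⟧ and A x \ Z = A ⟦x⟧.out \ S ⟦x⟧
  have hcap : ∀ x : α, Z ∩ A x = S (Quotient.mk st x) := by
    intro x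
    ext y
    constructor
    · rintro ⟨hyZ, hyA⟩
      have : Quotient.mk st y = Quotient.mk st x := Quotient.sound (hAsymm hyA)
      rwa [hZdef, Set.mem_setOf_eq, this] at hyZ
    · intro hy
      have hyA : y ∈ A x := by
        have := hS1 (Quotient.mk st x) hy
        rwa [hAout x] at this
      have : Quotient.mk st y = Quotient.mk st x := Quotient.sound (hAsymm hyA)
      exact ⟨by rwa [hZdef, Set.mem_setOf_eq, this], hyA⟩
  have hdiff : ∀ x : α, A x \ Z = A ((Quotient.mk st x).out) \ S (Quotient.mk st x) := by
    intro x
    rw [hAout x]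
    ext y
    constructor
    · rintro ⟨hyA, hyZ⟩
      refine ⟨hyA, fun hy => hyZ ?_⟩
      have : Quotient.mk st y = Quotient.mk st x := Quotient.sound (hAsymm hyA)
      rwa [hZdef, Set.mem_setOf_eq, this]
    · rintro ⟨hyA, hyS⟩
      refine ⟨hyA, fun hy => hyS ?_⟩
      have : Quotient.mk st y = Quotient.mk st x := Quotient.sound (hAsymm hyA)
      rwa [hZdef, Set.mem_setOf_eq, this] at hy
  -- both halves of each atom are of size κ
  have hcapcard : ∀ x : α, #(Z ∩ A x : Set α) = #α := by
    intro x; rw [hcap x]; exact hS2 _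
  have hdiffcard : ∀ x : α, #(A x \ Z : Set α) = #α := by
    intro x; rw [hdiff x]; exact hS3 _
  -- Z is not in 𝓘
  have hZnotin : Z ∉ 𝓘 := by
    intro hZ
    have hne : (#α) ≠ 0 := (Cardinal.aleph0_pos.trans_le hinf).ne'
    obtain ⟨x⟩ : Nonempty α := Cardinal.mk_ne_zero_iff.mp hne
    have h1 : (Z ∩ A x : Set α).Nonempty :=
      Set.nonempty_coe_sort.mp (Cardinal.mk_ne_zero_iff.mp (by rw [hcapcard x]; exact hne))
    have h2 : (A x \ Z : Set α).Nonempty :=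
      Set.nonempty_coe_sort.mp (Cardinal.mk_ne_zero_iff.mp (by rw [hdiffcard x]; exact hne))
    obtain ⟨y, hyZ, hyA⟩ := h1
    obtain ⟨y', hy'A, hy'Z⟩ := h2
    exact hy'Z (((hyA Z hZ).symm.trans (hy'A Z hZ)).1 hyZ)
  refine ⟨Z, hZnotin, ?_⟩
  intro D hD hDcard f
  by_cases hZD : Z ∈ D
  · -- D = insert Z D', with D' ⊆ 𝓘
    set D' : Set (Set α) := D \ {Z} with hD'def
    have hD'sub : D' ⊆ 𝓘 := by
      rintro I ⟨hID, hIZ⟩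
      rcases hD hID with h | h
      · exact absurd h hIZ
      · exact h
    have hD'card : #D' < #α := lt_of_le_of_lt (Cardinal.mk_le_mk_of_subset (Set.diff_subset)) hDcard
    have hC' := hind D' hD'sub hD'card f
    -- pick a point in the D'-combination
    have hC'ne : (⋂ I ∈ D', (if f I then Iᶜ else I)).Nonempty :=
      Set.nonempty_coe_sort.mp (Cardinal.mk_ne_zero_iff.mp
        (by rw [hC']; exact (Cardinal.aleph0_pos.trans_le hinf).ne'))
    obtain ⟨x, hx⟩ := hC'ne
    -- the atom of x is contained in the D'-combination
    have hAx : A x ⊆ ⋂ I ∈ D', (if f I then Iᶜ else I) := by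
      intro y hy
      simp only [Set.mem_iInter] at hx ⊢
      intro I hI
      have hxI := hx I hI
      have hiff := hy I (hD'sub hI)
      by_cases hf : f I <;> simp [hf] at hxI ⊢
      · exact fun h => hxI (hiff.2 h)
      · exact hiff.1 hxI
    -- rewrite the D-combination
    have hDeq : D = insert Z D' := by
      rw [hD'def, Set.insert_diff_singleton, Set.insert_eq_self.2 hZD]
    have hsubset : (if f Z then Zᶜ else Z) ∩ A x ⊆ ⋂ I ∈ D, (if f I then Iᶜ else I) := by
      rw [hDeq, Set.biInter_insert]
      exact Set.inter_subset_inter_right _ hAx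
    have hlow : #α ≤ #(⋂ I ∈ D, (if f I then Iᶜ else I) : Set α) := by
      refine le_trans ?_ (Cardinal.mk_le_mk_of_subset hsubset)
      by_cases hf : f Z
      · have he : (if f Z then Zᶜ else Z) ∩ A x = A x \ Z := by
          rw [if_pos hf]; ext y; simp only [Set.mem_inter_iff, Set.mem_compl_iff,
            Set.mem_diff]; tauto
        rw [he, hdiffcard x]
      · have he : (if f Z then Zᶜ else Z) ∩ A x = Z ∩ A x := by
          rw [if_neg (by simp [hf])]
        rw [he, hcapcard x]
    exact le_antisymm (Cardinal.mk_set_le _) hlow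
  · have hDsub : D ⊆ 𝓘 := by
      intro I hI
      rcases hD hI with h | h
      · exact absurd (h ▸ hI) hZD
      · exact h
    exact hind D hDsub hDcard f
end

section
/- Let κ be an infinite regular cardinal and 𝓘 a strongly independent family on κ such that the set of its Boolean combinations of length < κ has cardinality less than the reaping number 𝔯(κ). Then 𝓘 is not maximal as a strongly independent family. -/
open Cardinal

/-- `X` splits `Y` (on a set of size `#α`): both `Y ∩ X` and `Y ∖ X` have full size. -/
def SplitsSet (α : Type) (X Y : Set α) : Prop := #(↥(Y ∩ X)) = #α ∧ #(↥(Y \ X)) = #α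

/-- The reaping number `𝔯(α)`: least size of an unsplittable family of size-`#α`
subsets of `α`. -/
noncomputable def reapingNumber (α : Type) : Cardinal.{0} :=
  sInf {c | ∃ R : Set (Set α), #R = c ∧ (∀ Y ∈ R, #(↥Y) = #α) ∧
    ¬ ∃ X : Set α, ∀ Y ∈ R, SplitsSet α X Y}

/-- a strongly independent family on an infinite regular `κ`
whose set of Boolean combinations of length `< κ` has size `< 𝔯(κ)`
is not maximal as a strongly independent family. -/
theorem strongly_independent_below_reaping_not_maximal (α : Type)
    (hinf : ℵ₀ ≤ #α) (hreg : (#α).IsRegular) (𝓘 : Set (Set α))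
    (hind : ∀ D ⊆ 𝓘, #D < #α → ∀ f : Set α → Bool,
      #(↥(⋂ I ∈ D, (if f I then Iᶜ else I))) = #α)
    (hsmall : #(↥{C : Set α | ∃ D ⊆ 𝓘, ∃ f : Set α → Bool, #D < #α ∧
      C = ⋂ I ∈ D, (if f I then Iᶜ else I)}) < reapingNumber α) :
    ∃ Z : Set α, Z ∉ 𝓘 ∧ ∀ D ⊆ insert Z 𝓘, #D < #α → ∀ f : Set α → Bool,
      #(↥(⋂ I ∈ D, (if f I then Iᶜ else I))) = #α := by
  set 𝓑 := {C : Set α | ∃ D ⊆ 𝓘, ∃ f : Set α → Bool, #D < #α ∧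
      C = ⋂ I ∈ D, (if f I then Iᶜ else I)} with h𝓑
  have hsize : ∀ C ∈ 𝓑, #C = #α := by
    rintro C ⟨D, hD, f, hlt, rfl⟩
    exact hind D hD hlt f
  have hsplit : ∃ X : Set α, ∀ C ∈ 𝓑, SplitsSet α X C := by
    by_contra hcon
    have : reapingNumber α ≤ #𝓑 :=
      csInf_le (OrderBot.bddBelow _) ⟨𝓑, rfl, hsize, hcon⟩
    exact (this.trans_lt hsmall).false
  obtain ⟨X, hX⟩ := hsplit
  have hXnot : X ∉ 𝓘 := by
    intro hXI
    have hmem : Xᶜ ∈ 𝓑 := by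
      refine ⟨{X}, by simpa using hXI, fun _ => true, ?_, ?_⟩
      · simpa using one_lt_aleph0.trans_le hinf
      · simp
    have h1 := (hX _ hmem).1
    rw [Set.compl_inter_self, Cardinal.mk_emptyCollection] at h1
    exact (aleph0_pos.trans_le hinf).ne' h1.symm
  refine ⟨X, hXnot, ?_⟩
  intro D hD hDlt f
  by_cases hXD : X ∈ D
  · have hD' : D \ {X} ⊆ 𝓘 := by
      intro I hI
      rcases Set.mem_insert_iff.1 (hD hI.1) with h | h
      · exact absurd (Set.mem_singleton_iff.2 h) hI.2
      · exact h
    have hD'lt : #(D \ {X} : Set (Set α)) < #α :=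
      (Cardinal.mk_le_mk_of_subset Set.diff_subset).trans_lt hDlt
    have hBmem : (⋂ I ∈ D \ {X}, (if f I then Iᶜ else I)) ∈ 𝓑 :=
      ⟨D \ {X}, hD', f, hD'lt, rfl⟩
    have hs := hX _ hBmem
    have hDeq : D = insert X (D \ {X}) := by
      rw [Set.insert_diff_singleton, Set.insert_eq_self.2 hXD]
    rw [hDeq, Set.biInter_insert]
    cases hfX : f X
    · rw [if_neg (by simp [hfX])]
      have h1 := hs.1
      rwa [Set.inter_comm] at h1
    · rw [if_pos rfl]
      have h2 := hs.2
      rwa [Set.diff_eq, Set.inter_comm] at h2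
  · exact hind D (fun I hI => (Set.mem_insert_iff.1 (hD hI)).resolve_left
      (by rintro rfl; exact hXD hI)) hDlt f
end

section
/- For every uncountable regular cardinal κ there exists an infinite 𝓒-independent family on κ, where 𝓒 is the club filter: a countably infinite family 𝓘 ⊆ 𝒫(κ) such that every finite Boolean combination of 𝓘 is stationary in κ. -/
/-!
Countably many pairwise disjoint stationary sets suffice: index them as `T F` by the finite sets
`F ⊆ ℕ` and put `J n := ⋃ {T F | n ∈ F}`. The Boolean combination of the `J n` with positive
indices `S` and negative indices `R` contains the atom `T S`, hence is stationary.

The disjoint stationary sets come from an Ulam matrix when `κ = μ⁺`: fixing injections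
`e_α : α → μ`, for each `β` one of the `μ` sets `{α > β | e_α β = ξ}` is stationary, and by
pigeonhole infinitely many `β` share the same `ξ`. When `κ` is a limit cardinal, every `ℵₙ` is a
regular cardinal below `κ`, and the ordinals of cofinality `ℵₙ` form disjoint stationary sets:
the `ℵₙ`-th point of the normal enumeration of a club has cofinality `ℵₙ`.
-/

open Cardinal

/-- `S` is a stationary subset of the ordinal `o`: it meets every club in `o`. -/
def IsStationaryIn (S : Set Ordinal) (o : Ordinal) : Prop :=
  S ⊆ Set.Iio o ∧ ∀ C, IsClubIn C o → (S ∩ C).Nonempty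

open Order Set Function
open scoped Ordinal

universe u

section RegularCardinalOrder

variable {α : Type u} [LinearOrder α]

theorem Order.IsNormal.cof_Iio_map {β : Type u} [LinearOrder β] {f : α → β} (hf : IsNormal f)
    {a : α} (ha : IsSuccLimit a) : cof (Iio (f a)) = cof (Iio a) := by
  refine (cof_congr_of_strictMono (f := fun x : Iio a ↦ (⟨f x, hf.strictMono x.2⟩ : Iio (f a)))
    (fun x y hxy ↦ hf.strictMono hxy) ?_).symm
  rintro ⟨b, hb⟩
  obtain ⟨c, hc, hbc⟩ := (hf.lt_iff_exists_lt ha).1 hb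
  exact ⟨_, ⟨⟨c, hc⟩, rfl⟩, hbc.le⟩

theorem isSuccLimit_of_aleph0_le_cof_Iio {a : α} (h : ℵ₀ ≤ cof (Iio a)) : IsSuccLimit a := by
  have : Nonempty (Iio a) := cof_ne_zero_iff.1 (aleph0_pos.trans_le h).ne'
  have : NoTopOrder (Iio a) := one_lt_cof_iff.1 (aleph0_le_cof_iff.1 h)
  obtain ⟨b, hb⟩ := ‹Nonempty (Iio a)›
  refine ⟨fun hmin ↦ hmin.not_lt hb, fun c hca ↦ ?_⟩
  obtain ⟨d, hd⟩ := exists_not_le (⟨c, hca.lt⟩ : Iio a)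
  exact hca.2 (not_le.1 hd) d.2

theorem isStationary_Ioi [NoMaxOrder α] (x : α) : IsStationary (Ioi x) := by
  refine .of_not_isCofinal_compl (not_isCofinal_iff.2 ?_)
  obtain ⟨y, hy⟩ := exists_gt x
  exact ⟨y, fun z hz ↦ (not_lt.1 hz).trans_lt hy⟩

variable [WellFoundedLT α] [IsRegularCardinalOrder α]

theorem isStationary_setOf_cof_Iio_eq {c : Cardinal.{u}} (hc : c.IsRegular) (hcα : c < #α) :
    IsStationary {x : α | cof (Iio x) = c} := by
  intro t ht
  have hlt : c.ord < typeLT α := by rwa [← ord_cardinalMk, ord_lt_ord]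
  set a := Ordinal.enum (α := α) (· < ·) ⟨c.ord, hlt⟩
  have ha : cof (Iio a) = c := by
    rw [Order.cof_Iio, ← hc.cof_ord]
    exact congrArg Ordinal.cof (Ordinal.typein_enum _ hlt)
  have hlim := isSuccLimit_of_aleph0_le_cof_Iio (ha ▸ hc.aleph0_le)
  refine ⟨(enum t ht.isCofinal a : α), ?_, (enum t _ a).2⟩
  rw [mem_ofPred_eq, ← ha]
  exact ht.isNormal_enum.cof_Iio_map hlim

theorem noMaxOrder_of_aleph0_lt_mk (hα : ℵ₀ < #α) : NoMaxOrder α := by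
  have : Nonempty α := mk_ne_zero_iff.1 (aleph0_pos.trans hα).ne'
  rw [← noTopOrder_iff_noMaxOrder, ← one_lt_cof_iff, ← aleph0_le_cof_iff, cof_eq_cardinalMk]
  exact hα.le

theorem exists_pairwise_disjoint_isStationary_of_embedding {β : Type u} (hα : ℵ₀ < #α)
    (hβ : #β < #α) (e : ∀ x : α, Iio x ↪ β) :
    ∃ T : ℕ → Set α, (∀ n, IsStationary (T n)) ∧ Pairwise (Disjoint on T) := by
  have := noMaxOrder_of_aleph0_lt_mk hα
  have : Infinite α := infinite_iff.2 hα.le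
  let A : β → α → Set α := fun b y ↦ {x | ∃ h : y < x, e x ⟨y, h⟩ = b}
  have hrow : ∀ y, ∃ b, IsStationary (A b y) := by
    intro y
    have hcover : ⋃ b, A b y = Ioi y := by ext x; simp [A]
    rw [← isStationary_iUnion_iff (by rw [cof_eq_cardinalMk]; exact hα.ne') (by simpa using hβ),
      hcover]
    exact isStationary_Ioi y
  choose G hG using hrow
  obtain ⟨b, hb⟩ := exists_infinite_fiber G hβ
  let y : ℕ ↪ G ⁻¹' {b} := Infinite.natEmbedding _
  refine ⟨fun n ↦ A b (y n), fun n ↦ ?_, fun m n hmn ↦ ?_⟩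
  · have hyn : G (y n) = b := (y n).2
    simpa only [hyn] using hG (y n)
  · refine disjoint_left.2 fun x ⟨hm, hmx⟩ ⟨hn, hnx⟩ ↦ hmn (y.injective (Subtype.ext ?_))
    exact Subtype.mk.inj ((e x).injective (hmx.trans hnx.symm))

theorem exists_pairwise_disjoint_isStationary_of_isSuccPrelimit (hα : IsSuccPrelimit #α)
    (hα₀ : ℵ₀ < #α) : ∃ T : ℕ → Set α, (∀ n, IsStationary (T n)) ∧ Pairwise (Disjoint on T) := by
  let c : ℕ → Cardinal.{u} := fun n ↦ succ^[n] ℵ₀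
  have hc : ∀ n, (c n).IsRegular ∧ c n < #α := by
    intro n
    induction n with
    | zero => exact ⟨isRegular_aleph0, hα₀⟩
    | succ n ih =>
      simp only [c, iterate_succ_apply']
      exact ⟨isRegular_succ ih.1.aleph0_le, hα.succ_lt ih.2⟩
  have hc_inj : Injective c := StrictMono.injective <| strictMono_nat_of_lt_succ fun n ↦ by
    simp only [c, iterate_succ_apply']
    exact lt_succ _
  refine ⟨fun n ↦ {x | cof (Iio x) = c n}, fun n ↦ isStationary_setOf_cof_Iio_eq (hc n).1 (hc n).2,
    fun m n hmn ↦ disjoint_left.2 fun x hm hn ↦ hmn (hc_inj (hm.symm.trans hn))⟩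

theorem exists_pairwise_disjoint_isStationary_of_eq_succ {μ : Cardinal.{u}} (hμ : #α = succ μ)
    (hα₀ : ℵ₀ < #α) : ∃ T : ℕ → Set α, (∀ n, IsStationary (T n)) ∧ Pairwise (Disjoint on T) := by
  refine exists_pairwise_disjoint_isStationary_of_embedding (β := μ.out) hα₀
    (by rw [mk_out, hμ]; exact lt_succ μ) fun x ↦ Classical.choice ((le_def _ _).1 ?_)
  rw [mk_out, ← lt_succ_iff, ← hμ]
  exact mk_Iio_lt x ord_cardinalMk

theorem exists_pairwise_disjoint_isStationary (hα : ℵ₀ < #α) :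
    ∃ T : ℕ → Set α, (∀ n, IsStationary (T n)) ∧ Pairwise (Disjoint on T) := by
  obtain ⟨μ, hμ⟩ | hlim := mem_range_succ_or_isSuccPrelimit #α
  · exact exists_pairwise_disjoint_isStationary_of_eq_succ hμ.symm hα
  · exact exists_pairwise_disjoint_isStationary_of_isSuccPrelimit hlim hα

end RegularCardinalOrder

theorem isRegularCardinalOrder_Iio_ord {κ : Cardinal.{u}} (hκ : κ.IsRegular) :
    IsRegularCardinalOrder (Iio κ.ord) :=
  ⟨by rw [Ordinal.type_lt_Iio, Ordinal.cof_Iio, ← Ordinal.lift_cof, hκ.cof_ord, lift_ord]⟩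

theorem isClubIn_Iio (o : Ordinal) : IsClubIn (Iio o) o :=
  ⟨subset_rfl, fun a ha ↦ ⟨a, ha, le_rfl⟩, fun _ ha _ _ ↦ ha⟩

theorem IsClubIn.isClub_preimage_val {C : Set Ordinal} {o : Ordinal} (hC : IsClubIn C o) :
    IsClub (Subtype.val ⁻¹' C : Set (Iio o)) := by
  refine ⟨dirSupClosed_iff_of_linearOrder.2 fun d hd hne a ha ↦ ?_, fun x ↦ ?_⟩
  · by_cases had : a ∈ d
    · exact hd had
    have hlt : ∀ {c}, c ∈ d → c < a := fun hc ↦ (ha.1 hc).lt_of_ne fun h ↦ had (h ▸ hc)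
    obtain ⟨c₀, hc₀⟩ := hne
    refine hC.2.2 a a.2 (zero_le.trans_lt (Subtype.coe_lt_coe.2 (hlt hc₀))).ne' fun b hba ↦ ?_
    obtain ⟨c, hc, hbc⟩ := (lt_isLUB_iff (b := ⟨b, hba.trans a.2⟩) ha).1 hba
    exact ⟨c, hd hc, hbc, hlt hc⟩
  · obtain ⟨b, hb, hxb⟩ := hC.2.1 x x.2
    exact ⟨⟨b, hC.1 hb⟩, hb, hxb⟩

theorem IsStationary.isStationaryIn_image_val {o : Ordinal} {S : Set (Iio o)}
    (hS : IsStationary S) : IsStationaryIn (Subtype.val '' S) o := by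
  refine ⟨image_subset_iff.2 fun x _ ↦ x.2, fun C hC ↦ ?_⟩
  obtain ⟨x, hxS, hxC⟩ := hS hC.isClub_preimage_val
  exact ⟨x, mem_image_of_mem _ hxS, hxC⟩

theorem IsStationaryIn.mono {S S' : Set Ordinal} {o : Ordinal} (hS : IsStationaryIn S o)
    (hSS' : S ⊆ S') (hS' : S' ⊆ Iio o) : IsStationaryIn S' o :=
  ⟨hS', fun C hC ↦ (hS.2 C hC).mono (inter_subset_inter_left C hSS')⟩

theorem IsStationaryIn.nonempty {S : Set Ordinal} {o : Ordinal} (hS : IsStationaryIn S o) :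
    S.Nonempty :=
  (hS.2 _ (isClubIn_Iio o)).mono inter_subset_left

theorem exists_pairwise_disjoint_isStationaryIn {κ : Cardinal.{0}} (hκ : κ.IsRegular)
    (hu : ℵ₀ < κ) : ∃ T : ℕ → Set Ordinal.{0}, (∀ n, IsStationaryIn (T n) κ.ord) ∧
      Pairwise (Disjoint on T) := by
  have := isRegularCardinalOrder_Iio_ord hκ
  obtain ⟨T, hT, hT_disj⟩ := exists_pairwise_disjoint_isStationary (α := Iio κ.ord)
    (by rwa [mk_Iio_ordinal, card_ord, aleph0_lt_lift])
  exact ⟨fun n ↦ Subtype.val '' T n, fun n ↦ (hT n).isStationaryIn_image_val,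
    fun m n hmn ↦ (disjoint_image_iff Subtype.val_injective).2 (hT_disj hmn)⟩

section AtomUnion

variable {X : Type*} {T : Finset ℕ → Set X}

def atomUnion (T : Finset ℕ → Set X) (n : ℕ) : Set X :=
  ⋃ (F : Finset ℕ) (_ : n ∈ F), T F

theorem subset_atomUnion {F : Finset ℕ} {n : ℕ} (hn : n ∈ F) : T F ⊆ atomUnion T n :=
  subset_biUnion_of_mem (u := T) hn

theorem disjoint_atomUnion (hT : Pairwise (Disjoint on T)) {F : Finset ℕ} {n : ℕ} (hn : n ∉ F) :
    Disjoint (T F) (atomUnion T n) := by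
  simp only [atomUnion, disjoint_iUnion_right]
  exact fun G hG ↦ hT fun h ↦ hn (h ▸ hG)

theorem atomUnion_injective (hT : Pairwise (Disjoint on T)) (hne : ∀ F, (T F).Nonempty) :
    Injective (atomUnion T) := by
  intro m n hmn
  by_contra h
  obtain ⟨x, hx⟩ := hne {m}
  have hxn : x ∈ atomUnion T n := hmn ▸ subset_atomUnion (Finset.mem_singleton_self m) hx
  exact disjoint_left.1 (disjoint_atomUnion hT (Finset.notMem_singleton.2 (Ne.symm h))) hx hxn

theorem exists_subset_biInter_diff_biUnion (hT : Pairwise (Disjoint on T))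
    (hne : ∀ F, (T F).Nonempty) {S R : Finset (Set X)} (hS : ↑S ⊆ range (atomUnion T))
    (hR : ↑R ⊆ range (atomUnion T)) (hSR : Disjoint S R) :
    ∃ F, T F ⊆ (⋂ I ∈ S, I) \ ⋃ I ∈ R, I := by
  set F := S.preimage (atomUnion T) (atomUnion_injective hT hne).injOn
  refine ⟨F, fun x hx ↦ ⟨mem_iInter₂.2 fun I hI ↦ ?_, ?_⟩⟩
  · obtain ⟨n, rfl⟩ := hS hI
    exact subset_atomUnion (Finset.mem_preimage.2 hI) hx
  · simp only [mem_iUnion, not_exists]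
    intro I hI hxI
    obtain ⟨m, rfl⟩ := hR hI
    have hm : m ∉ F :=
      fun hm ↦ Finset.disjoint_left.1 hSR (Finset.mem_preimage.1 hm) hI
    exact disjoint_left.1 (disjoint_atomUnion hT hm) hx hxI

end AtomUnion

/-- on every uncountable regular `κ` there is an infinite (countable)
`𝓒`-independent family: every finite Boolean combination is stationary in `κ`. -/
theorem exists_infinite_club_independent (κ : Cardinal.{0})
    (hreg : κ.IsRegular) (hu : ℵ₀ < κ) :
    ∃ 𝓘 : Set (Set Ordinal.{0}), (∀ I ∈ 𝓘, I ⊆ Set.Iio κ.ord) ∧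
      𝓘.Infinite ∧ 𝓘.Countable ∧
      ∀ S T : Finset (Set Ordinal.{0}), ↑S ⊆ 𝓘 → ↑T ⊆ 𝓘 → Disjoint S T →
        IsStationaryIn ((Set.Iio κ.ord ∩ ⋂ I ∈ S, I) \ ⋃ I ∈ T, I) κ.ord := by
  obtain ⟨T, hT, hT_disj⟩ := exists_pairwise_disjoint_isStationaryIn hreg hu
  let A : Finset ℕ → Set Ordinal := T ∘ Denumerable.eqv (Finset ℕ)
  have hA_disj : Pairwise (Disjoint on A) :=
    hT_disj.comp_of_injective (Denumerable.eqv _).injective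
  have hA_ne : ∀ F, (A F).Nonempty := fun F ↦ (hT _).nonempty
  refine ⟨range (atomUnion A), ?_, infinite_range_of_injective (atomUnion_injective hA_disj hA_ne),
    countable_range _, fun S R hS hR hSR ↦ ?_⟩
  · rintro _ ⟨n, rfl⟩
    exact iUnion₂_subset fun F _ ↦ (hT _).1
  · obtain ⟨F, hF⟩ := exists_subset_biInter_diff_biUnion hA_disj hA_ne hS hR hSR
    exact (hT _).mono (fun x hx ↦ ⟨⟨(hT _).1 hx, (hF hx).1⟩, (hF hx).2⟩) fun x hx ↦ hx.1.1
end
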